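/- Consider a fading multiple access channel with $N$ users with i.i.d. channel power gains $h_1,\dots,h_N$ whose common CDF belongs to class $\mathcal{C}$ with tail parameters $(\alpha_h,\beta_h,n_h,l_h,H)$, and symmetric individual average power constraints $P_{\rm ave}$. The optimal sum-rate is $R_{\rm IPL}(N)=\mathbb{E}\left[\log\left(\frac{h^\star_N}{\lambda_N}\right)\mathbf{1}\{h^\star_N\ge \lambda_N\}\right]$, where $h^\star_N=\max_i h_i$ and the Lagrange multiplier $\lambda_N>0$ is chosen so that $\mathbb{E}\left[\left(\frac{1}{\lambda_N}-\frac{1}{h_i}\right)^+\mathbf{1}\{h_i=h^\star_N\}\right]=P_{\rm ave}$. Then $\lim_{N\to\infty} N\lambda_N=\frac{1}{P_{\rm ave}}$ and consequently $\lim_{N\to\infty}\frac{R_{\rm IPL}(N)}{\log N}=1$. -/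

import Mathlib

/-!
Ties between the i.i.d. continuous gains have probability zero, so summing the individual
power constraints gives `E[(1/λ_N - 1/h*_N)⁺] = N P_ave`. The integrand is at most `1/λ_N`,
and at least `1/λ_N - 1/x₀` on `{h*_N ≥ x₀}`, an event of probability `≥ 1 - F(x₀)^N → 1`;
hence `N λ_N P_ave → 1`, and in particular `log (1/λ_N) ~ log N`.

For the rate, `log (h*_N/λ_N)⁺` is at least `log (x₀/λ_N)` on `{h*_N ≥ x₀}` and at most
`(log N + (h*_N)^s / N)/s - log λ_N` (from `log z ≤ z - 1`). The class-`𝒞` tail decays faster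
than every power, so all moments of the gains are finite and `E[(h*_N)^s] ≤ N E[h^s]`. Dividing
by `log N` and letting `s → ∞` squeezes `R_IPL(N)/log N` to `1`.
-/

open MeasureTheory ProbabilityTheory Filter Real Set Topology

/-- The maximum of `h 1, ..., h N`. -/
noncomputable def maxOver {Ω : Type*} (h : ℕ → Ω → ℝ) (N : ℕ) (ω : Ω) : ℝ :=
  sSup ((fun i => h i ω) '' Set.Icc 1 N)

section MaxOver

variable {Ω : Type*} {h : ℕ → Ω → ℝ} {N : ℕ}

lemma maxOver_eq_sup' (hN : 1 ≤ N) (ω : Ω) :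
    maxOver h N ω = (Finset.Icc 1 N).sup' (Finset.nonempty_Icc.2 hN) (fun i => h i ω) := by
  rw [Finset.sup'_eq_csSup_image, maxOver, Finset.coe_Icc]

lemma measurable_maxOver [MeasurableSpace Ω] (hmeas : ∀ i, Measurable (h i)) (hN : 1 ≤ N) :
    Measurable (maxOver h N) := by
  have hsup := Finset.measurable_sup' (Finset.nonempty_Icc.2 hN)
    (fun i (_ : i ∈ Finset.Icc 1 N) => hmeas i)
  convert hsup using 1
  ext ω
  rw [maxOver_eq_sup' hN, Finset.sup'_apply]

lemma exists_eq_maxOver (hN : 1 ≤ N) (ω : Ω) :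
    ∃ i ∈ Finset.Icc 1 N, h i ω = maxOver h N ω := by
  obtain ⟨i, hi, hval⟩ := Finset.exists_mem_eq_sup' (Finset.nonempty_Icc.2 hN) (fun i => h i ω)
  exact ⟨i, hi, by rw [maxOver_eq_sup' hN, hval]⟩

lemma maxOver_le_iff (hN : 1 ≤ N) (ω : Ω) (x : ℝ) :
    maxOver h N ω ≤ x ↔ ∀ i ∈ Finset.Icc 1 N, h i ω ≤ x := by
  rw [maxOver_eq_sup' hN, Finset.sup'_le_iff]

lemma maxOver_nonneg (hnn : ∀ i ω, 0 ≤ h i ω) (hN : 1 ≤ N) (ω : Ω) : 0 ≤ maxOver h N ω := by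
  obtain ⟨i, -, hi⟩ := exists_eq_maxOver (h := h) hN ω
  exact hi ▸ hnn i ω

lemma pow_maxOver_le_sum (hnn : ∀ i ω, 0 ≤ h i ω) (hN : 1 ≤ N) (s : ℕ) (ω : Ω) :
    maxOver h N ω ^ s ≤ ∑ i ∈ Finset.Icc 1 N, h i ω ^ s := by
  obtain ⟨i, hi, hval⟩ := exists_eq_maxOver (h := h) hN ω
  rw [← hval]
  exact Finset.single_le_sum (fun j _ => pow_nonneg (hnn j ω) s) hi

lemma sum_ite_eq_maxOver {ω : Ω} (hinj : Function.Injective fun i => h i ω) (hN : 1 ≤ N)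
    (f : ℝ → ℝ) :
    ∑ i ∈ Finset.Icc 1 N, (if h i ω = maxOver h N ω then f (h i ω) else 0)
      = f (maxOver h N ω) := by
  obtain ⟨i, hi, hval⟩ := exists_eq_maxOver (h := h) hN ω
  rw [Finset.sum_eq_single_of_mem i hi, if_pos hval, hval]
  intro j _ hji
  rw [if_neg (fun hj => hji (hinj (hj.trans hval.symm)))]

end MaxOver

namespace ProbabilityTheory

variable {Ω : Type*} [MeasurableSpace Ω] {μ : Measure Ω}

lemma nullSingletonClass_map_of_continuous_cdf [IsProbabilityMeasure μ] {X : Ω → ℝ}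
    (hX : Measurable X)
    (hcont : Continuous fun x => (μ {ω | X ω ≤ x}).toReal) : NullSingletonClass (μ.map X) := by
  have := Measure.isProbabilityMeasure_map (μ := μ) hX.aemeasurable
  have hcdf : ⇑(cdf (μ.map X)) = fun x => (μ {ω | X ω ≤ x}).toReal := by
    ext x
    rw [cdf_eq_real, map_measureReal_apply hX measurableSet_Iic]
    rfl
  have hcont' : Continuous (cdf (μ.map X)) := hcdf ▸ hcont
  refine ⟨fun c => ?_⟩
  rw [← measure_cdf (μ := μ.map X), StieltjesFunction.measure_singleton,
    leftLim_eq_of_tendsto (hcont'.continuousAt.tendsto.mono_left nhdsWithin_le_nhds),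
    sub_self, ENNReal.ofReal_zero]

lemma IndepFun.measure_eq_eq_zero [IsFiniteMeasure μ] {X Y : Ω → ℝ} (hXY : IndepFun X Y μ)
    (hX : Measurable X) (hY : Measurable Y) [NullSingletonClass (μ.map Y)] :
    μ {ω | X ω = Y ω} = 0 := by
  have hdiag : MeasurableSet {p : ℝ × ℝ | p.1 = p.2} :=
    measurableSet_eq_fun measurable_fst measurable_snd
  have hpre : ∀ x : ℝ, Prod.mk x ⁻¹' {p : ℝ × ℝ | p.1 = p.2} = {x} := by
    intro x
    ext y
    simp [eq_comm]
  rw [← Set.preimage_ofPred_eq (p := fun p : ℝ × ℝ => p.1 = p.2) (f := fun ω => (X ω, Y ω)),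
    ← Measure.map_apply (hX.prodMk hY) hdiag,
    (indepFun_iff_map_prod_eq_prod_map_map hX.aemeasurable hY.aemeasurable).1 hXY,
    Measure.prod_apply hdiag]
  simp [hpre]

lemma iIndepFun.ae_injective [IsFiniteMeasure μ] {h : ℕ → Ω → ℝ} (hindep : iIndepFun h μ)
    (hmeas : ∀ i, Measurable (h i)) (hatom : ∀ i, NullSingletonClass (μ.map (h i))) :
    ∀ᵐ ω ∂μ, Function.Injective fun i => h i ω := by
  have hpair : ∀ i j, ∀ᵐ ω ∂μ, h i ω = h j ω → i = j := by
    intro i j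
    by_cases hij : i = j
    · exact Eventually.of_forall fun _ _ => hij
    · have := (hindep.indepFun hij).measure_eq_eq_zero (hmeas i) (hmeas j)
      filter_upwards [measure_eq_zero_iff_ae_notMem.1 this] with ω hω heq
      exact absurd heq hω
  simp only [Function.Injective, ae_all_iff]
  exact hpair

lemma iIndepFun.measure_maxOver_le {h : ℕ → Ω → ℝ} (hindep : iIndepFun h μ) {N : ℕ}
    (hN : 1 ≤ N) (x : ℝ) :
    μ {ω | maxOver h N ω ≤ x} = ∏ i ∈ Finset.Icc 1 N, μ {ω | h i ω ≤ x} := by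
  have hset : {ω | maxOver h N ω ≤ x} = ⋂ i ∈ Finset.Icc 1 N, {ω | h i ω ≤ x} := by
    ext ω
    simp only [Set.mem_ofPred_eq, Set.mem_iInter, maxOver_le_iff hN ω x]
  rw [hset, hindep.meas_biInter (s := fun i => {ω | h i ω ≤ x})
    fun i _ => ⟨Set.Iic x, measurableSet_Iic, rfl⟩]

lemma identDistrib_of_toReal_measure_le_eq [IsFiniteMeasure μ] {X Y : Ω → ℝ}
    (hX : Measurable X) (hY : Measurable Y)
    (hXY : ∀ x, (μ {ω | X ω ≤ x}).toReal = (μ {ω | Y ω ≤ x}).toReal) : IdentDistrib X Y μ μ where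
  aemeasurable_fst := hX.aemeasurable
  aemeasurable_snd := hY.aemeasurable
  map_eq := Measure.ext_of_Iic _ _ fun x => by
    rw [Measure.map_apply hX measurableSet_Iic, Measure.map_apply hY measurableSet_Iic]
    exact (ENNReal.toReal_eq_toReal_iff' (measure_ne_top _ _) (measure_ne_top _ _)).1 (hXY x)

end ProbabilityTheory

section Tail

lemma tendsto_rpow_mul_exp_neg_mul_rpow_add {β n : ℝ} (hβ : 0 < β) (hn : 0 < n) {H : ℝ → ℝ}
    (hHo : H =o[atTop] fun x => x ^ n) (p : ℝ) :
    Tendsto (fun x => x ^ p * exp (-β * x ^ n + H x)) atTop (𝓝 0) := by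
  have hdom : Tendsto (fun x : ℝ => x ^ p * exp (-(β / 2) * x ^ n)) atTop (𝓝 0) := by
    refine ((tendsto_rpow_mul_exp_neg_mul_atTop_nhds_zero (p / n) (β / 2) (by positivity)).comp
      (tendsto_rpow_atTop hn)).congr' ?_
    filter_upwards [eventually_gt_atTop 0] with x hx
    rw [Function.comp_apply, ← rpow_mul hx.le, mul_div_cancel₀ _ hn.ne']
  refine squeeze_zero' ?_ ?_ hdom
  · filter_upwards [eventually_ge_atTop 0] with x hx
    have := rpow_nonneg hx p
    positivity
  filter_upwards [hHo.def (half_pos hβ), eventually_ge_atTop 0] with x hHx hx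
  rw [norm_eq_abs, norm_eq_abs, abs_of_nonneg (rpow_nonneg hx n)] at hHx
  have := rpow_nonneg hx p
  gcongr
  linarith [le_abs_self (H x)]

variable {F : ℝ → ℝ} {α β n l : ℝ} {H : ℝ → ℝ}

lemma tendsto_rpow_mul_one_sub_of_tail (hα : α ≠ 0) (hβ : 0 < β) (hn : 0 < n)
    (hHo : H =o[atTop] fun x => x ^ n)
    (htail : Tendsto (fun x => (1 - F x) / (α * x ^ l * exp (-β * x ^ n + H x))) atTop (𝓝 1))
    (p : ℝ) : Tendsto (fun x => x ^ p * (1 - F x)) atTop (𝓝 0) := by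
  have hdecay : Tendsto (fun x => x ^ p * (α * x ^ l * exp (-β * x ^ n + H x))) atTop (𝓝 0) := by
    refine (((tendsto_rpow_mul_exp_neg_mul_rpow_add hβ hn hHo (p + l)).const_mul α).congr' ?_).trans
      (by rw [mul_zero])
    filter_upwards [eventually_gt_atTop 0] with x hx
    rw [rpow_add hx]
    ring
  have hprod := htail.mul hdecay
  rw [one_mul] at hprod
  refine hprod.congr' ?_
  filter_upwards [eventually_gt_atTop 0] with x hx
  have : α * x ^ l * exp (-β * x ^ n + H x) ≠ 0 := by
    have := rpow_pos_of_pos hx l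
    positivity
  field_simp

lemma eventually_lt_one_of_tail (hα : 0 < α)
    (htail : Tendsto (fun x => (1 - F x) / (α * x ^ l * exp (-β * x ^ n + H x))) atTop (𝓝 1)) :
    ∀ᶠ x in atTop, F x < 1 := by
  filter_upwards [htail.eventually (eventually_gt_nhds one_pos), eventually_gt_atTop 0]
    with x hx hx0
  have := rpow_pos_of_pos hx0 l
  have := (div_pos_iff_of_pos_right (by positivity : 0 < α * x ^ l * exp (-β * x ^ n + H x))).1
    hx
  linarith

end Tail

section Moments

variable {Ω : Type*} [MeasurableSpace Ω] {μ : Measure Ω} [IsFiniteMeasure μ]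

lemma integrable_of_measure_lt_le_rpow {f : Ω → ℝ} (hf : Measurable f) (hnn : 0 ≤ᵐ[μ] f)
    {q : ℝ} (hq : 1 < q) (htail : ∀ᶠ t in atTop, μ {ω | t < f ω} ≤ ENNReal.ofReal (t ^ (-q))) :
    Integrable f μ := by
  obtain ⟨T, hT⟩ := (htail.and (eventually_gt_atTop 0)).exists_forall_of_atTop
  have hTpos : 0 < T := (hT T le_rfl).2
  refine ⟨hf.aestronglyMeasurable, ?_⟩
  rw [hasFiniteIntegral_iff_ofReal hnn, lintegral_eq_lintegral_meas_lt μ hnn hf.aemeasurable,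
    ← Ioc_union_Ioi_eq_Ioi hTpos.le, lintegral_union measurableSet_Ioi Ioc_disjoint_Ioi_same]
  refine ENNReal.add_lt_top.2 ⟨?_, ?_⟩
  · calc ∫⁻ t in Ioc 0 T, μ {ω | t < f ω} ≤ ∫⁻ _ in Ioc 0 T, μ univ :=
          lintegral_mono fun t => measure_mono (subset_univ _)
      _ < ⊤ := by simpa using ENNReal.mul_lt_top (measure_lt_top μ univ) ENNReal.ofReal_lt_top
  · calc ∫⁻ t in Ioi T, μ {ω | t < f ω} ≤ ∫⁻ t in Ioi T, ENNReal.ofReal (t ^ (-q)) :=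
          setLIntegral_mono' measurableSet_Ioi fun t ht => (hT t ht.le).1
      _ < ⊤ := (integrableOn_Ioi_rpow_of_lt (by linarith) hTpos).lintegral_lt_top

lemma integrable_pow_of_tendsto_rpow_mul_measure_lt {X : Ω → ℝ} (hX : Measurable X)
    (hnn : ∀ ω, 0 ≤ X ω)
    (htail : ∀ p : ℝ, Tendsto (fun x => x ^ p * (μ {ω | x < X ω}).toReal) atTop (𝓝 0))
    {s : ℕ} (hs : s ≠ 0) : Integrable (fun ω => X ω ^ s) μ := by
  have hs' : (0 : ℝ) < s := by positivity
  refine integrable_of_measure_lt_le_rpow (hX.pow_const s)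
    (Eventually.of_forall fun ω => pow_nonneg (hnn ω) s) one_lt_two ?_
  have hroot := (htail (2 * s)).comp (tendsto_rpow_atTop (inv_pos.2 hs'))
  filter_upwards [hroot.eventually (eventually_le_nhds one_pos), eventually_gt_atTop 0]
    with t ht ht0
  have hpow : (t ^ (s : ℝ)⁻¹) ^ (2 * s : ℝ) = t ^ (2 : ℝ) := by
    rw [← rpow_mul ht0.le, mul_comm (2 : ℝ), inv_mul_cancel_left₀ hs'.ne']
  have hset : {ω | t < X ω ^ s} = {ω | t ^ (s : ℝ)⁻¹ < X ω} := by
    ext ω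
    rw [Set.mem_ofPred_eq, Set.mem_ofPred_eq, rpow_inv_lt_iff_of_pos ht0.le (hnn ω) hs',
      rpow_natCast]
  rw [Function.comp_apply, hpow] at ht
  rw [hset, ← ENNReal.ofReal_toReal (measure_ne_top μ _), rpow_neg ht0.le]
  refine ENNReal.ofReal_le_ofReal ?_
  rw [← one_div (t ^ (2 : ℝ)), le_div_iff₀' (rpow_pos_of_pos ht0 2)]
  exact ht

end Moments

section Model

variable {Ω : Type*} [MeasurableSpace Ω] {μ : Measure Ω} {h : ℕ → Ω → ℝ} {N : ℕ}

lemma integral_comp_maxOver_eq (hinj : ∀ᵐ ω ∂μ, Function.Injective fun i => h i ω)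
    (hN : 1 ≤ N) {f : ℝ → ℝ} {P : ℝ}
    (hshare : ∀ i ∈ Finset.Icc 1 N,
      ∫ ω, (if h i ω = maxOver h N ω then f (h i ω) else 0) ∂μ = P) (hP : P ≠ 0) :
    Integrable (fun ω => f (maxOver h N ω)) μ ∧ ∫ ω, f (maxOver h N ω) ∂μ = N * P := by
  have hint : ∀ i ∈ Finset.Icc 1 N,
      Integrable (fun ω => if h i ω = maxOver h N ω then f (h i ω) else 0) μ :=
    -- a non-integrable summand would have integral `0 ≠ P`
    fun i hi => Integrable.of_integral_ne_zero ((hshare i hi).trans_ne hP)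
  have hsum : (fun ω => ∑ i ∈ Finset.Icc 1 N, (if h i ω = maxOver h N ω then f (h i ω) else 0))
      =ᵐ[μ] fun ω => f (maxOver h N ω) := by
    filter_upwards [hinj] with ω hω using sum_ite_eq_maxOver hω hN f
  refine ⟨(integrable_finsetSum _ hint).congr hsum, ?_⟩
  rw [← integral_congr_ae hsum, integral_finsetSum _ hint, Finset.sum_congr rfl hshare,
    Finset.sum_const, Nat.card_Icc, nsmul_eq_mul, Nat.add_sub_cancel]

lemma mul_toReal_measure_le_integral_comp [IsFiniteMeasure μ] {Y : Ω → ℝ} {f : ℝ → ℝ}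
    (hf0 : ∀ ω, 0 ≤ f (Y ω)) (hint : Integrable (fun ω => f (Y ω)) μ) {x c : ℝ} (hc : 0 ≤ c)
    (hfc : ∀ y, x ≤ y → c ≤ f y) :
    c * (μ {ω | x ≤ Y ω}).toReal ≤ ∫ ω, f (Y ω) ∂μ :=
  calc c * (μ {ω | x ≤ Y ω}).toReal ≤ c * μ.real {ω | c ≤ f (Y ω)} :=
        mul_le_mul_of_nonneg_left (measureReal_mono fun ω hω => hfc _ hω) hc
    _ ≤ ∫ ω, f (Y ω) ∂μ :=
        mul_meas_ge_le_integral_of_nonneg (Eventually.of_forall hf0) hint c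

variable [IsProbabilityMeasure μ] {F : ℝ → ℝ}

lemma toReal_measure_lt_eq (hmeas : ∀ i, Measurable (h i))
    (hcdf : ∀ i x, (μ {ω | h i ω ≤ x}).toReal = F x) (i : ℕ) (x : ℝ) :
    (μ {ω | x < h i ω}).toReal = 1 - F x := by
  have hcompl : {ω | x < h i ω} = {ω | h i ω ≤ x}ᶜ := by
    ext ω
    simp
  rw [hcompl, prob_compl_eq_one_sub (measurableSet_le (hmeas i) measurable_const),
    ENNReal.toReal_sub_of_le prob_le_one ENNReal.one_ne_top, ENNReal.toReal_one, hcdf]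

lemma one_sub_pow_le_toReal_measure_le_maxOver (hmeas : ∀ i, Measurable (h i))
    (hindep : iIndepFun h μ) (hcdf : ∀ i x, (μ {ω | h i ω ≤ x}).toReal = F x) (hN : 1 ≤ N)
    (x : ℝ) : 1 - F x ^ N ≤ (μ {ω | x ≤ maxOver h N ω}).toReal := by
  have hmax : (μ {ω | maxOver h N ω ≤ x}).toReal = F x ^ N := by
    rw [hindep.measure_maxOver_le hN, ENNReal.toReal_prod,
      Finset.prod_congr rfl fun i _ => hcdf i x, Finset.prod_const, Nat.card_Icc,
      Nat.add_sub_cancel]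
  have hcompl : {ω | maxOver h N ω ≤ x}ᶜ ⊆ {ω | x ≤ maxOver h N ω} :=
    fun ω hω => by
      simp only [mem_compl_iff, mem_ofPred_eq, not_le] at hω
      exact hω.le
  calc 1 - F x ^ N = (μ {ω | maxOver h N ω ≤ x}ᶜ).toReal := by
        rw [prob_compl_eq_one_sub (measurableSet_le (measurable_maxOver hmeas hN) measurable_const),
          ENNReal.toReal_sub_of_le prob_le_one ENNReal.one_ne_top, ENNReal.toReal_one, hmax]
    _ ≤ (μ {ω | x ≤ maxOver h N ω}).toReal := measureReal_mono hcompl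

lemma mul_one_sub_pow_le_integral_comp_maxOver (hmeas : ∀ i, Measurable (h i))
    (hindep : iIndepFun h μ) (hcdf : ∀ i x, (μ {ω | h i ω ≤ x}).toReal = F x) (hN : 1 ≤ N)
    {f : ℝ → ℝ} (hf0 : ∀ y, 0 ≤ f y) (hint : Integrable (fun ω => f (maxOver h N ω)) μ)
    {x c : ℝ} (hc : 0 ≤ c) (hfc : ∀ y, x ≤ y → c ≤ f y) :
    c * (1 - F x ^ N) ≤ ∫ ω, f (maxOver h N ω) ∂μ :=
  (mul_le_mul_of_nonneg_left (one_sub_pow_le_toReal_measure_le_maxOver hmeas hindep hcdf hN x)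
    hc).trans (mul_toReal_measure_le_integral_comp (fun _ => hf0 _) hint hc hfc)

lemma integral_max_inv_sub_inv_le {Y : Ω → ℝ} (hY : ∀ ω, 0 ≤ Y ω) {lam : ℝ} (hlam : 0 < lam)
    (hint : Integrable (fun ω => max (1 / lam - 1 / Y ω) 0) μ) :
    ∫ ω, max (1 / lam - 1 / Y ω) 0 ∂μ ≤ 1 / lam := by
  refine (integral_mono hint (integrable_const (1 / lam)) fun ω => max_le ?_ ?_).trans_eq
    (by simp)
  · linarith [one_div_nonneg.2 (hY ω)]
  · positivity

end Model

lemma mul_log_le_log_add_pow_div {y M : ℝ} (hy : 0 < y) (hM : 0 < M) (s : ℕ) :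
    s * log y ≤ log M + y ^ s / M := by
  have := log_le_sub_one_of_pos (div_pos (pow_pos hy s) hM)
  rw [log_div (pow_pos hy s).ne' hM.ne', log_pow] at this
  linarith

lemma ite_log_div_le {lam M y : ℝ} (hlam : 0 < lam) (hlam1 : lam ≤ 1) (hM : 1 ≤ M) (hy : 0 ≤ y)
    {s : ℕ} (hs : s ≠ 0) :
    (if lam ≤ y then log (y / lam) else 0) ≤ (log M + y ^ s / M) / s - log lam := by
  have hs' : (0 : ℝ) < s := by positivity
  split_ifs with hly
  · have hy' : 0 < y := hlam.trans_le hly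
    rw [log_div hy'.ne' hlam.ne', le_sub_iff_add_le, sub_add_cancel, le_div_iff₀ hs', mul_comm]
    exact mul_log_le_log_add_pow_div hy' (zero_lt_one.trans_le hM) s
  · have := log_nonneg hM
    have := log_nonpos hlam.le hlam1
    have : 0 ≤ y ^ s / M := by positivity
    have : 0 ≤ (log M + y ^ s / M) / s := by positivity
    linarith

lemma ite_log_div_nonneg {lam : ℝ} (hlam : 0 < lam) (y : ℝ) :
    0 ≤ if lam ≤ y then log (y / lam) else 0 := by
  split_ifs with hly
  · exact log_nonneg ((one_le_div hlam).2 hly)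
  · exact le_rfl

lemma log_sub_log_le_ite_log_div {lam x y : ℝ} (hlam : 0 < lam) (hlx : lam ≤ x) (hxy : x ≤ y) :
    log x - log lam ≤ if lam ≤ y then log (y / lam) else 0 := by
  rw [if_pos (hlx.trans hxy), log_div (hlam.trans_le (hlx.trans hxy)).ne' hlam.ne']
  gcongr
  exact hlam.trans_le hlx

section RateBound

variable {Ω : Type*} [MeasurableSpace Ω] {μ : Measure Ω} {h : ℕ → Ω → ℝ} {N s : ℕ} {lam m : ℝ}

lemma integral_pow_maxOver_le (hmeas : ∀ i, Measurable (h i)) (hnn : ∀ i ω, 0 ≤ h i ω)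
    (hN : 1 ≤ N) (hint : ∀ i, Integrable (fun ω => h i ω ^ s) μ)
    (hmom : ∀ i ∈ Finset.Icc 1 N, ∫ ω, h i ω ^ s ∂μ ≤ m) :
    Integrable (fun ω => maxOver h N ω ^ s) μ ∧ ∫ ω, maxOver h N ω ^ s ∂μ ≤ N * m := by
  have hsum := integrable_finsetSum (Finset.Icc 1 N) fun i _ => hint i
  have hpow : Integrable (fun ω => maxOver h N ω ^ s) μ :=
    hsum.mono' ((measurable_maxOver hmeas hN).pow_const s).aestronglyMeasurable <|
      Eventually.of_forall fun ω => by
        rw [norm_of_nonneg (pow_nonneg (maxOver_nonneg hnn hN ω) s)]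
        simpa only [Finset.sum_apply] using pow_maxOver_le_sum hnn hN s ω
  refine ⟨hpow, ?_⟩
  calc ∫ ω, maxOver h N ω ^ s ∂μ ≤ ∫ ω, ∑ i ∈ Finset.Icc 1 N, h i ω ^ s ∂μ :=
        integral_mono hpow (by simpa only [Finset.sum_apply] using hsum)
          (pow_maxOver_le_sum hnn hN s)
    _ ≤ ∑ _i ∈ Finset.Icc 1 N, m := by
        rw [integral_finsetSum _ fun i _ => hint i]
        exact Finset.sum_le_sum hmom
    _ = N * m := by rw [Finset.sum_const, Nat.card_Icc, nsmul_eq_mul, Nat.add_sub_cancel]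

variable [IsProbabilityMeasure μ]

lemma integral_ite_log_div_maxOver_le (hmeas : ∀ i, Measurable (h i)) (hnn : ∀ i ω, 0 ≤ h i ω)
    (hN : 1 ≤ N) (hlam : 0 < lam) (hlam1 : lam ≤ 1) (hs : s ≠ 0)
    (hint : ∀ i, Integrable (fun ω => h i ω ^ s) μ)
    (hmom : ∀ i ∈ Finset.Icc 1 N, ∫ ω, h i ω ^ s ∂μ ≤ m) :
    Integrable (fun ω => if lam ≤ maxOver h N ω then log (maxOver h N ω / lam) else 0) μ ∧
      ∫ ω, (if lam ≤ maxOver h N ω then log (maxOver h N ω / lam) else 0) ∂μ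
        ≤ (log N + m) / s - log lam := by
  obtain ⟨hpow, hmoment⟩ := integral_pow_maxOver_le hmeas hnn hN hint hmom
  have hmax := measurable_maxOver hmeas hN
  have hbound' : Integrable (fun ω => (log N + maxOver h N ω ^ s / N) / s) μ :=
    ((integrable_const _).add (hpow.div_const _)).div_const _
  have hbound : Integrable (fun ω => (log N + maxOver h N ω ^ s / N) / s - log lam) μ :=
    hbound'.sub (integrable_const _)
  have hle : ∀ ω, (if lam ≤ maxOver h N ω then log (maxOver h N ω / lam) else 0)
      ≤ (log N + maxOver h N ω ^ s / N) / s - log lam := fun ω =>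
    ite_log_div_le hlam hlam1 (by exact_mod_cast hN) (maxOver_nonneg hnn hN ω) hs
  have hrate : Integrable
      (fun ω => if lam ≤ maxOver h N ω then log (maxOver h N ω / lam) else 0) μ := by
    refine hbound.mono' ((Measurable.ite (measurableSet_le measurable_const hmax)
      (measurable_log.comp (hmax.div_const lam)) measurable_const).aestronglyMeasurable)
      (Eventually.of_forall fun ω => ?_)
    rw [norm_of_nonneg (ite_log_div_nonneg hlam _)]
    exact hle ω
  refine ⟨hrate, (integral_mono hrate hbound hle).trans ?_⟩
  rw [integral_sub hbound' (integrable_const _), integral_div, integral_add (integrable_const _)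
    (hpow.div_const _), integral_div, integral_const, integral_const]
  simp only [probReal_univ, one_smul]
  gcongr
  rwa [div_le_iff₀' (by positivity)]

end RateBound

section Limits

lemma tendsto_natCast_mul_of_bounds {lam q : ℕ → ℝ} {P x0 : ℝ} (hP : 0 < P) (hx0 : 0 < x0)
    (hlam : ∀ N, 0 < lam N) (hq : Tendsto q atTop (𝓝 1))
    (hupper : ∀ᶠ N : ℕ in atTop, N * P ≤ 1 / lam N)
    (hlower : ∀ᶠ N : ℕ in atTop, lam N ≤ x0 → (1 / lam N - 1 / x0) * q N ≤ N * P) :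
    Tendsto (fun N : ℕ => (N : ℝ) * lam N) atTop (𝓝 (1 / P)) := by
  have hle : ∀ᶠ N : ℕ in atTop, (N : ℝ) * lam N * P ≤ 1 := by
    filter_upwards [hupper] with N hN
    have := (le_div_iff₀ (hlam N)).1 hN
    linarith
  have hlam0 : Tendsto lam atTop (𝓝 0) := by
    have hdom : Tendsto (fun N : ℕ => 1 / (N * P)) atTop (𝓝 0) :=
      tendsto_const_nhds.div_atTop (tendsto_natCast_atTop_atTop.atTop_mul_const hP)
    refine squeeze_zero' (Eventually.of_forall fun N => (hlam N).le) ?_ hdom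
    filter_upwards [hle, eventually_gt_atTop 0] with N hN hN0
    rw [le_div_iff₀ (by positivity)]
    linarith
  have hge : ∀ᶠ N : ℕ in atTop, q N * (1 - lam N / x0) ≤ N * lam N * P := by
    filter_upwards [hlower, hlam0.eventually (eventually_le_nhds hx0)] with N hN hNx
    have key := mul_le_mul_of_nonneg_right (hN hNx) (hlam N).le
    have hl := (hlam N).ne'
    calc q N * (1 - lam N / x0) = (1 / lam N - 1 / x0) * q N * lam N := by field_simp
      _ ≤ N * P * lam N := key
      _ = N * lam N * P := by ring
  have hlim : Tendsto (fun N : ℕ => (N : ℝ) * lam N * P) atTop (𝓝 1) := by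
    have hq' : Tendsto (fun N => q N * (1 - lam N / x0)) atTop (𝓝 1) := by
      simpa using hq.mul ((hlam0.div_const x0).const_sub 1)
    exact tendsto_of_tendsto_of_tendsto_of_le_of_le' hq' tendsto_const_nhds hge hle
  simpa [mul_div_cancel_right₀ _ hP.ne'] using hlim.div_const P

lemma tendsto_div_log_of_bounds {R lam q : ℕ → ℝ} {L c : ℝ} (hL : 0 < L)
    (hlam : ∀ N, 0 < lam N) (hmul : Tendsto (fun N : ℕ => (N : ℝ) * lam N) atTop (𝓝 L))
    (hq : Tendsto q atTop (𝓝 1))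
    (hlower : ∀ᶠ N : ℕ in atTop, (c - log (lam N)) * q N ≤ R N)
    (hupper : ∀ s : ℕ, ∃ C, ∀ᶠ N : ℕ in atTop, R N ≤ log N / (s + 1) + C - log (lam N)) :
    Tendsto (fun N : ℕ => R N / log N) atTop (𝓝 1) := by
  have hlogN : Tendsto (fun N : ℕ => log N) atTop atTop :=
    tendsto_log_atTop.comp tendsto_natCast_atTop_atTop
  have hlogpos : ∀ᶠ N : ℕ in atTop, 0 < log N :=
    hlogN.eventually (eventually_gt_atTop 0)
  have hloglam : Tendsto (fun N : ℕ => -log (lam N) / log N) atTop (𝓝 1) := by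
    have hsmall := ((continuousAt_log hL.ne').tendsto.comp hmul).div_atTop hlogN
    refine (by simpa using (tendsto_const_nhds (x := (1 : ℝ))).sub hsmall :
      Tendsto (fun N : ℕ => 1 - log (N * lam N) / log N) atTop (𝓝 1)).congr' ?_
    filter_upwards [hlogpos, eventually_gt_atTop 0] with N hN hN0
    rw [log_mul (by positivity) (hlam N).ne']
    field_simp
    ring
  have hconst : ∀ C : ℝ, Tendsto (fun N : ℕ => C / log N) atTop (𝓝 0) := fun C =>
    tendsto_const_nhds.div_atTop hlogN
  refine tendsto_order.2 ⟨fun a ha => ?_, fun a ha => ?_⟩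
  · have hlim : Tendsto (fun N : ℕ => (c / log N + -log (lam N) / log N) * q N) atTop (𝓝 1) := by
      simpa using ((hconst c).add hloglam).mul hq
    filter_upwards [hlim.eventually (eventually_gt_nhds ha), hlower, hlogpos] with N hN hR hlog
    refine hN.trans_le ?_
    rw [← add_div, div_mul_eq_mul_div, ← sub_eq_add_neg]
    exact div_le_div_of_nonneg_right hR hlog.le
  · obtain ⟨s, hs⟩ := exists_nat_one_div_lt (sub_pos.2 ha)
    obtain ⟨C, hC⟩ := hupper s
    have hlim : Tendsto (fun N : ℕ => 1 / (s + 1) + C / log N + -log (lam N) / log N) atTop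
        (𝓝 (1 / (s + 1) + 1)) := by
      simpa using (tendsto_const_nhds.add (hconst C)).add hloglam
    have hlt : 1 / ((s : ℝ) + 1) + 1 < a := by linarith
    filter_upwards [hlim.eventually (eventually_lt_nhds hlt), hC, hlogpos]
      with N hN hR hlog
    refine lt_of_le_of_lt ?_ hN
    rw [div_le_iff₀ hlog]
    calc R N ≤ log N / (s + 1) + C - log (lam N) := hR
      _ = (1 / (s + 1) + C / log N + -log (lam N) / log N) * log N := by
        field_simp
        ring

lemma tendsto_zero_of_tendsto_natCast_mul {u : ℕ → ℝ} {L : ℝ}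
    (hu : Tendsto (fun N : ℕ => (N : ℝ) * u N) atTop (𝓝 L)) : Tendsto u atTop (𝓝 0) := by
  refine (hu.div_atTop tendsto_natCast_atTop_atTop).congr' ?_
  filter_upwards [eventually_gt_atTop 0] with N hN
  field_simp

end Limits

section Scaling

variable {Ω : Type*} [MeasurableSpace Ω] {μ : Measure Ω} [IsProbabilityMeasure μ]
  {h : ℕ → Ω → ℝ} {F : ℝ → ℝ} {lam : ℕ → ℝ} {x0 : ℝ}

lemma tendsto_natCast_mul_of_power_constraint (hmeas : ∀ i, Measurable (h i))
    (hnn : ∀ i ω, 0 ≤ h i ω) (hindep : iIndepFun h μ)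
    (hcdf : ∀ i x, (μ {ω | h i ω ≤ x}).toReal = F x)
    (hinj : ∀ᵐ ω ∂μ, Function.Injective fun i => h i ω) (hx0 : 0 < x0)
    (hq : Tendsto (fun N : ℕ => 1 - F x0 ^ N) atTop (𝓝 1)) {P : ℝ} (hP : 0 < P)
    (hlam : ∀ N, 0 < lam N)
    (hconstraint : ∀ N : ℕ, 1 ≤ N → ∀ i ∈ Finset.Icc 1 N,
      ∫ ω, (if h i ω = maxOver h N ω then max (1 / lam N - 1 / h i ω) 0 else 0) ∂μ = P) :
    Tendsto (fun N : ℕ => (N : ℝ) * lam N) atTop (𝓝 (1 / P)) := by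
  have hpower := fun N hN => integral_comp_maxOver_eq hinj hN
    (f := fun y => max (1 / lam N - 1 / y) 0) (hconstraint N hN) hP.ne'
  refine tendsto_natCast_mul_of_bounds hP hx0 hlam hq ?_ ?_ <;>
    filter_upwards [eventually_ge_atTop 1] with N hN <;> rw [← (hpower N hN).2]
  · exact integral_max_inv_sub_inv_le (maxOver_nonneg hnn hN) (hlam N) (hpower N hN).1
  · exact fun hlx => mul_one_sub_pow_le_integral_comp_maxOver hmeas hindep hcdf hN
      (f := fun y => max (1 / lam N - 1 / y) 0) (fun _ => le_max_right _ _) (hpower N hN).1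
      (sub_nonneg.2 (one_div_le_one_div_of_le (hlam N) hlx))
      fun y hy => le_max_of_le_left (by gcongr)

lemma tendsto_integral_ite_log_div_maxOver_div_log (hmeas : ∀ i, Measurable (h i))
    (hnn : ∀ i ω, 0 ≤ h i ω) (hindep : iIndepFun h μ)
    (hcdf : ∀ i x, (μ {ω | h i ω ≤ x}).toReal = F x)
    (hmom : ∀ s i, s ≠ 0 → Integrable (fun ω => h i ω ^ s) μ) (hx0 : 0 < x0)
    (hq : Tendsto (fun N : ℕ => 1 - F x0 ^ N) atTop (𝓝 1)) {L : ℝ} (hL : 0 < L)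
    (hlam : ∀ N, 0 < lam N) (hmul : Tendsto (fun N : ℕ => (N : ℝ) * lam N) atTop (𝓝 L)) :
    Tendsto (fun N : ℕ =>
      (∫ ω, (if lam N ≤ maxOver h N ω then log (maxOver h N ω / lam N) else 0) ∂μ) / log N)
      atTop (𝓝 1) := by
  have hmom_eq : ∀ s i, ∫ ω, h i ω ^ s ∂μ = ∫ ω, h 1 ω ^ s ∂μ := fun s i =>
    ((identDistrib_of_toReal_measure_le_eq (hmeas i) (hmeas 1) fun x =>
      (hcdf i x).trans (hcdf 1 x).symm).comp (measurable_id.pow_const s)).integral_eq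
  have hrate := fun s N (hN : 1 ≤ N) hlam1 => integral_ite_log_div_maxOver_le hmeas hnn hN
    (hlam N) hlam1 s.succ_ne_zero (fun i => hmom (s + 1) i s.succ_ne_zero)
    fun i _ => (hmom_eq (s + 1) i).le
  have hsmall := (tendsto_zero_of_tendsto_natCast_mul hmul).eventually
    (eventually_le_nhds (lt_min hx0 one_pos))
  refine tendsto_div_log_of_bounds hL hlam hmul hq (c := log x0) ?_
    fun s => ⟨(∫ ω, h 1 ω ^ (s + 1) ∂μ) / (s + 1), ?_⟩ <;>
    filter_upwards [eventually_ge_atTop 1, hsmall] with N hN hlamN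
  · exact mul_one_sub_pow_le_integral_comp_maxOver hmeas hindep hcdf hN
      (ite_log_div_nonneg (hlam N)) (hrate 0 N hN (hlamN.trans (min_le_right _ _))).1
      (sub_nonneg.2 (log_le_log (hlam N) (hlamN.trans (min_le_left _ _))))
      fun y => log_sub_log_le_ite_log_div (hlam N) (hlamN.trans (min_le_left _ _))
  · simpa [add_div] using (hrate s N hN (hlamN.trans (min_le_right _ _))).2

end Scaling

theorem primary_mac_individual_power_scaling_general
    {Ω : Type*} [MeasurableSpace Ω] (μ : Measure Ω) [IsProbabilityMeasure μ]
    (h : ℕ → Ω → ℝ) (hmeas : ∀ i, Measurable (h i)) (hnn : ∀ i ω, 0 ≤ h i ω)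
    (hindep : iIndepFun h μ)
    (F : ℝ → ℝ) (hcdf : ∀ i x, (μ {ω | h i ω ≤ x}).toReal = F x)
    (hFcont : Continuous F)
    (α β n l : ℝ) (hα : 0 < α) (hβ : 0 < β) (hn : 0 < n)
    (H : ℝ → ℝ)
    (hHo : H =o[atTop] fun x => x ^ n)
    (htail : Tendsto
      (fun x => (1 - F x) / (α * x ^ l * Real.exp (-β * x ^ n + H x)))
      atTop (𝓝 1))
    (Pave : ℝ) (hPave : 0 < Pave)
    (lam : ℕ → ℝ) (hlampos : ∀ N, 0 < lam N)
    (hconstraint : ∀ N : ℕ, 1 ≤ N → ∀ i ∈ Finset.Icc 1 N,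
      (∫ ω, (if h i ω = maxOver h N ω then max (1 / lam N - 1 / h i ω) 0 else 0) ∂μ)
        = Pave) :
    Tendsto (fun N : ℕ => (N : ℝ) * lam N) atTop (𝓝 (1 / Pave)) ∧
    Tendsto (fun N : ℕ =>
      (∫ ω, (if lam N ≤ maxOver h N ω then Real.log (maxOver h N ω / lam N) else 0) ∂μ) /
        Real.log N) atTop (𝓝 1) := by
  have hinj := hindep.ae_injective hmeas fun i =>
    nullSingletonClass_map_of_continuous_cdf (hmeas i) (by simpa only [hcdf i] using hFcont)
  obtain ⟨x0, hFx0, hx0⟩ :=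
    ((eventually_lt_one_of_tail hα htail).and (eventually_gt_atTop 0)).exists
  have hq : Tendsto (fun N : ℕ => 1 - F x0 ^ N) atTop (𝓝 1) := by
    simpa using (tendsto_pow_atTop_nhds_zero_of_lt_one (hcdf 0 x0 ▸ ENNReal.toReal_nonneg)
      hFx0).const_sub 1
  have hmom : ∀ s i, s ≠ 0 → Integrable (fun ω => h i ω ^ s) μ := fun s i =>
    integrable_pow_of_tendsto_rpow_mul_measure_lt (hmeas i) (hnn i) fun p => by
      simpa only [toReal_measure_lt_eq hmeas hcdf] using
        tendsto_rpow_mul_one_sub_of_tail hα.ne' hβ hn hHo htail p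
  have hpower := tendsto_natCast_mul_of_power_constraint hmeas hnn hindep hcdf hinj hx0 hq
    hPave hlampos hconstraint
  exact ⟨hpower, tendsto_integral_ite_log_div_maxOver_div_log hmeas hnn hindep hcdf hmom hx0 hq
    (one_div_pos.2 hPave) hlampos hpower⟩

/-- Sum-rate scaling of a primary MAC with symmetric individual power constraints:
if `λ_N` satisfies the power constraint `E[(1/λ_N - 1/h_i)⁺ 1{h_i = h*_N}] = P_ave`
for each user, then `N λ_N → 1/P_ave` and the sum-rate
`R_IPL(N) = E[log(h*_N/λ_N) 1{h*_N ≥ λ_N}]` satisfies `R_IPL(N)/log N → 1`. -/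
theorem primary_mac_individual_power_scaling
    {Ω : Type*} [MeasurableSpace Ω] (μ : Measure Ω) [IsProbabilityMeasure μ]
    (h : ℕ → Ω → ℝ) (hmeas : ∀ i, Measurable (h i)) (hnn : ∀ i ω, 0 ≤ h i ω)
    (hindep : iIndepFun h μ)
    (F : ℝ → ℝ) (hcdf : ∀ i x, (μ {ω | h i ω ≤ x}).toReal = F x)
    (hFcont : Continuous F) (hFmono : StrictMonoOn F (Set.Ioi 0))
    (hsupp : ∀ x ≤ (0 : ℝ), F x = 0)
    (α β n l : ℝ) (hα : 0 < α) (hβ : 0 < β) (hn : 0 < n)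
    (H : ℝ → ℝ)
    (hslow : ∀ a > (0 : ℝ), Tendsto (fun x => H (a * x) / H x) atTop (𝓝 1))
    (hHo : H =o[atTop] fun x => x ^ n)
    (htail : Tendsto
      (fun x => (1 - F x) / (α * x ^ l * Real.exp (-β * x ^ n + H x)))
      atTop (𝓝 1))
    (η γ : ℝ) (hη : 0 < η) (hγ : 0 < γ)
    (horigin : Tendsto (fun x => F x / (η * x ^ γ)) (𝓝[>] 0) (𝓝 1))
    (Pave : ℝ) (hPave : 0 < Pave)
    (lam : ℕ → ℝ) (hlampos : ∀ N, 0 < lam N)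
    (hconstraint : ∀ N : ℕ, 1 ≤ N → ∀ i ∈ Finset.Icc 1 N,
      (∫ ω, (if h i ω = maxOver h N ω then max (1 / lam N - 1 / h i ω) 0 else 0) ∂μ)
        = Pave) :
    Tendsto (fun N : ℕ => (N : ℝ) * lam N) atTop (𝓝 (1 / Pave)) ∧
    Tendsto (fun N : ℕ =>
      (∫ ω, (if lam N ≤ maxOver h N ω then Real.log (maxOver h N ω / lam N) else 0) ∂μ) /
        Real.log N) atTop (𝓝 1) :=
  primary_mac_individual_power_scaling_general μ h hmeas hnn hindep F hcdf hFcont α β n l hα hβ hn H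
    hHo htail Pave hPave lam hlampos hconstraint
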